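/- arXiv:1411.5329 — 10 statements merged into one kernel-verified Lean document; each statement's English description precedes it below -/
import Mathlib

section
/- Given a nondegenerate simplex with vertices v₁,…,vₙ in ℝ^{n-1} and a point array x₁,…,xₙ in a metric space X, there exists a unique quadratic form W on ℝ^{n-1} satisfying W(vᵢ - vⱼ) = dist(xᵢ, xⱼ)² for all i, j. -/
/-!
Fix a vertex `v₀`. A quadratic form is determined by its polar bilinear form, and polarization
gives `polar W (vᵢ - v₀) (vⱼ - v₀) = W (vᵢ - v₀) + W (vⱼ - v₀) - W (vᵢ - vⱼ)`, so the prescribed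
values pin down the polar form on the edge vectors `vᵢ - v₀`, which span; this is uniqueness.
Since these edge vectors form a basis, the bilinear form with the Gram matrix
`(d(xᵢ, x₀)² + d(xⱼ, x₀)² - d(xᵢ, xⱼ)²) / 2` on them exists, and its diagonal is the required
form.
-/

open QuadraticMap

section

variable {R V P N : Type*} [CommRing R] [AddCommGroup V] [Module R V] [AddTorsor V P]
  [AddCommGroup N] [Module R N]

theorem QuadraticMap.polar_vsub_vsub (Q : QuadraticMap R V N) (p q r : P) :
    polar Q (p -ᵥ r) (q -ᵥ r) = Q (p -ᵥ r) + Q (q -ᵥ r) - Q (p -ᵥ q) := by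
  rw [← neg_neg (polar Q _ _), ← polar_neg_right, polar, ← sub_eq_add_neg,
    vsub_sub_vsub_cancel_right, QuadraticMap.map_neg]
  abel

theorem QuadraticMap.ext_of_affineSpan_eq_top (h2 : IsUnit (2 : R)) {s : Set P}
    (hs : affineSpan R s = ⊤) {p₀ : P} (hp₀ : p₀ ∈ s) {Q Q' : QuadraticMap R V N}
    (h : ∀ p ∈ s, ∀ q ∈ s, Q (p -ᵥ q) = Q' (p -ᵥ q)) : Q = Q' := by
  have hspan : Submodule.span R ((· -ᵥ p₀) '' s) = ⊤ := by
    rw [← vectorSpan_eq_span_vsub_set_right R hp₀, ← direction_affineSpan, hs,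
      AffineSubspace.direction_top]
  refine polarBilin_injective h2 (LinearMap.ext_on hspan ?_)
  rintro _ ⟨p, hp, rfl⟩
  refine LinearMap.ext_on hspan ?_
  rintro _ ⟨q, hq, rfl⟩
  simp only [polarBilin_apply_apply, polar_vsub_vsub, h p hp p₀ hp₀, h q hq p₀ hp₀, h p hp q hq]

end

namespace AffineBasis

variable {ι K V P : Type*} [CommRing K] [Invertible (2 : K)] [AddCommGroup V] [Module K V]
  [AddTorsor V P]

theorem exists_quadraticForm_vsub_eq (b : AffineBasis ι K P) (δ : ι → ι → K)
    (hδ_comm : ∀ i j, δ i j = δ j i) (hδ_self : ∀ i, δ i i = 0) :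
    ∃ Q : QuadraticForm K V, ∀ i j, Q (b i -ᵥ b j) = δ i j := by
  obtain ⟨i₀⟩ := b.nonempty
  set G : ι → ι → K := fun i j => ⅟2 * (δ i i₀ + δ j i₀ - δ i j)
  set e := b.basisOf i₀
  set B : LinearMap.BilinForm K V := e.constr K fun i => e.constr K fun j => G i j
  have hB : ∀ i j, B (b i -ᵥ b i₀) (b j -ᵥ b i₀) = G i j := by
    intro i j
    by_cases hi : i = i₀
    · subst hi
      simp [G, hδ_self, hδ_comm j]
    by_cases hj : j = i₀
    · subst hj
      simp [G, hδ_self, hδ_comm i]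
    rw [← b.basisOf_apply i₀ ⟨i, hi⟩, ← b.basisOf_apply i₀ ⟨j, hj⟩]
    simp only [B, e, Module.Basis.constr_basis]
  refine ⟨B.toQuadraticMap, fun i j => ?_⟩
  rw [LinearMap.BilinMap.toQuadraticMap_apply, ← vsub_sub_vsub_cancel_right _ _ (b i₀)]
  simp only [map_sub, LinearMap.sub_apply, hB, G, hδ_self, hδ_comm j i₀]
  linear_combination δ i j * invOf_mul_self (2 : K) + ⅟2 * hδ_comm j i

theorem existsUnique_quadraticForm_vsub_eq (b : AffineBasis ι K P) (δ : ι → ι → K)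
    (hδ_comm : ∀ i j, δ i j = δ j i) (hδ_self : ∀ i, δ i i = 0) :
    ∃! Q : QuadraticForm K V, ∀ i j, Q (b i -ᵥ b j) = δ i j := by
  obtain ⟨Q, hQ⟩ := b.exists_quadraticForm_vsub_eq δ hδ_comm hδ_self
  obtain ⟨i₀⟩ := b.nonempty
  refine ⟨Q, hQ, fun Q' hQ' => ext_of_affineSpan_eq_top (isUnit_of_invertible 2) b.tot
    (Set.mem_range_self i₀) ?_⟩
  rintro _ ⟨i, rfl⟩ _ ⟨j, rfl⟩
  rw [hQ, hQ']

end AffineBasis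

/-- existence and uniqueness of the associated quadratic form. -/
theorem associated_form_exists_unique (n : ℕ) (X : Type*) [MetricSpace X]
    (v : Fin (n + 1) → (Fin n → ℝ)) (hv : AffineIndependent ℝ v)
    (x : Fin (n + 1) → X) :
    ∃! W : QuadraticForm ℝ (Fin n → ℝ),
      ∀ i j, W (v i - v j) = dist (x i) (x j) ^ 2 := by
  have hspan : affineSpan ℝ (Set.range v) = ⊤ :=
    hv.affineSpan_eq_top_iff_card_eq_finrank_add_one.mpr (by simp)
  let b : AffineBasis (Fin (n + 1)) ℝ (Fin n → ℝ) := ⟨v, hv, hspan⟩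
  exact b.existsUnique_quadraticForm_vsub_eq
    (fun i j => dist (x i) (x j) ^ 2) (fun i j => by rw [dist_comm]) (fun i => by simp)
end

section
/- Let x₁,…,xₙ be points in a metric space X, and let W be the associated quadratic form on ℝ^{n-1} with respect to a nondegenerate simplex with vertices v₁,…,vₙ (i.e., W(vᵢ - vⱼ) = dist(xᵢ,xⱼ)² for all i,j). Then the array (x₁,…,xₙ) is isometric to an array of points in Euclidean space ℝ^{n-1} if and only if W(v) ≥ 0 for all v ∈ ℝ^{n-1}. -/
/-!
Both conditions say that `W` is a Gram form `u ↦ ‖T u‖²` of a linear map `T`. If `W ≥ 0`, its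
matrix factors as `Bᵀ B`, and `yᵢ = B vᵢ` realizes the distances. Conversely, given `y`, the
linear map `T` with `T (vᵢ - vⱼ) = yᵢ - yⱼ` exists because the `vᵢ` form an affine basis, and
`W` agrees with `‖T ·‖²` on all edges `vᵢ - vⱼ`; by polarization, a quadratic form is determined
by its values on the edges of an affine basis, so `W = ‖T ·‖² ≥ 0`.
-/

namespace QuadraticMap

variable {R M N : Type*} [CommRing R] [AddCommGroup M] [Module R M] [AddCommGroup N] [Module R N]

theorem polar_eq_add_sub_apply_sub (Q : QuadraticMap R M N) (x y : M) :
    polar Q x y = Q x + Q y - Q (x - y) := by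
  have h := polar_neg_right Q x y
  rw [polar, ← sub_eq_add_neg, QuadraticMap.map_neg] at h
  rw [← neg_neg (polar Q x y), ← h]
  abel

theorem ext_affineBasis {ι P : Type*} [AddTorsor M P] (b : AffineBasis ι R P) (h2 : IsUnit (2 : R))
    {Q₁ Q₂ : QuadraticMap R M N} (h : ∀ i j, Q₁ (b i -ᵥ b j) = Q₂ (b i -ᵥ b j)) : Q₁ = Q₂ := by
  obtain ⟨i₀⟩ := b.nonempty
  refine polarBilin_injective h2 <| (b.basisOf i₀).ext fun i => (b.basisOf i₀).ext fun j => ?_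
  simp only [polarBilin_apply_apply, AffineBasis.basisOf_apply, polar_eq_add_sub_apply_sub,
    vsub_sub_vsub_cancel_right, h]

end QuadraticMap

theorem AffineBasis.exists_linearMap_vsub {ι k V P V' P' : Type*} [CommRing k] [AddCommGroup V]
    [Module k V] [AddTorsor V P] [AddCommGroup V'] [Module k V'] [AddTorsor V' P']
    (b : AffineBasis ι k P) (y : ι → P') :
    ∃ f : V →ₗ[k] V', ∀ i j, f (b i -ᵥ b j) = y i -ᵥ y j := by
  obtain ⟨i₀⟩ := b.nonempty
  let f := (b.basisOf i₀).constr k fun j => y j -ᵥ y i₀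
  have hf (i : ι) : f (b i -ᵥ b i₀) = y i -ᵥ y i₀ := by
    by_cases hi : i = i₀
    · simp [hi]
    · simpa [f, AffineBasis.basisOf_apply] using (b.basisOf i₀).constr_basis k _ ⟨i, hi⟩
  refine ⟨f, fun i j => ?_⟩
  rw [← vsub_sub_vsub_cancel_right (b i) (b j) (b i₀), map_sub, hf, hf,
    vsub_sub_vsub_cancel_right]

open QuadraticMap Matrix

namespace QuadraticForm

theorem exists_eq_norm_sq_of_apply_vsub {ι V P E : Type*} [AddCommGroup V] [Module ℝ V]
    [AddTorsor V P] [NormedAddCommGroup E] [InnerProductSpace ℝ E] (b : AffineBasis ι ℝ P)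
    (Q : QuadraticForm ℝ V) (y : ι → E) (hy : ∀ i j, Q (b i -ᵥ b j) = ‖y i - y j‖ ^ 2) :
    ∃ T : V →ₗ[ℝ] E, ∀ u, Q u = ‖T u‖ ^ 2 := by
  obtain ⟨T, hT⟩ := b.exists_linearMap_vsub y
  have hnorm (w : E) : LinearMap.BilinMap.toQuadraticMap (innerₗ E) w = ‖w‖ ^ 2 :=
    real_inner_self_eq_norm_sq w
  have hQ : Q = (LinearMap.BilinMap.toQuadraticMap (innerₗ E)).comp T :=
    ext_affineBasis b two_ne_zero.isUnit fun i j => by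
      rw [hy, QuadraticMap.comp_apply, hT, hnorm, vsub_eq_sub]
  exact ⟨T, fun u => by rw [hQ, QuadraticMap.comp_apply, hnorm]⟩

theorem apply_eq_dotProduct_toMatrix'_mulVec {R ι : Type*} [CommRing R] [Invertible (2 : R)]
    [Fintype ι] [DecidableEq ι] (Q : QuadraticForm R (ι → R)) (u : ι → R) :
    Q u = u ⬝ᵥ (Q.toMatrix' *ᵥ u) := by
  rw [toMatrix', ← toLinearMap₂'_apply', toLinearMap₂'_toMatrix', associated_eq_self_apply R]

open scoped MatrixOrder in
theorem exists_eq_norm_sq_of_nonneg {ι : Type*} [Fintype ι] (Q : QuadraticForm ℝ (ι → ℝ))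
    (hQ : ∀ u, 0 ≤ Q u) : ∃ T : (ι → ℝ) →ₗ[ℝ] EuclideanSpace ℝ ι, ∀ u, Q u = ‖T u‖ ^ 2 := by
  classical
  have hpsd : Q.toMatrix'.PosSemidef := by
    refine .of_dotProduct_mulVec_nonneg ?_ fun u => ?_
    · rw [IsHermitian, conjTranspose_eq_transpose_of_trivial]
      exact Q.isSymm_toMatrix'
    · simpa [← apply_eq_dotProduct_toMatrix'_mulVec] using hQ u
  obtain ⟨B, hB⟩ := CStarAlgebra.nonneg_iff_eq_star_mul_self.mp hpsd.nonneg
  refine ⟨(WithLp.linearEquiv 2 ℝ (ι → ℝ)).symm.toLinearMap ∘ₗ B.mulVecLin, fun u => ?_⟩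
  rw [apply_eq_dotProduct_toMatrix'_mulVec, hB, ← mulVec_mulVec, dotProduct_mulVec,
    star_eq_conjTranspose, conjTranspose_eq_transpose_of_trivial, vecMul_transpose]
  simp only [LinearMap.coe_comp, Function.comp_apply, LinearEquiv.coe_coe,
    EuclideanSpace.real_norm_sq_eq]
  simp [dotProduct, _root_.sq]

end QuadraticForm

/-- the array is isometric to a Euclidean array iff W ≥ 0. -/
theorem isometric_to_euclidean_iff_nonneg (n : ℕ) (X : Type*) [MetricSpace X]
    (v : Fin (n + 1) → (Fin n → ℝ)) (hv : AffineIndependent ℝ v)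
    (x : Fin (n + 1) → X)
    (W : QuadraticForm ℝ (Fin n → ℝ))
    (hW : ∀ i j, W (v i - v j) = dist (x i) (x j) ^ 2) :
    (∃ y : Fin (n + 1) → EuclideanSpace ℝ (Fin n),
        ∀ i j, dist (x i) (x j) = ‖y i - y j‖) ↔ (∀ u, 0 ≤ W u) := by
  constructor
  · rintro ⟨y, hy⟩
    have hspan : affineSpan ℝ (Set.range v) = ⊤ :=
      hv.affineSpan_eq_top_iff_card_eq_finrank_add_one.mpr (by simp)
    obtain ⟨T, hT⟩ := W.exists_eq_norm_sq_of_apply_vsub ⟨v, hv, hspan⟩ y fun i j => by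
      show W (v i - v j) = _
      rw [hW, hy]
    exact fun u => hT u ▸ sq_nonneg _
  · intro hW_nonneg
    obtain ⟨T, hT⟩ := W.exists_eq_norm_sq_of_nonneg hW_nonneg
    refine ⟨fun i => T (v i), fun i j => ?_⟩
    rw [← sq_eq_sq₀ dist_nonneg (norm_nonneg _), ← map_sub, ← hT, hW]
end

section
/- For n = 3: let x₁, x₂, x₃ be points in a set X equipped with a symmetric nonnegative 'distance' function d vanishing on the diagonal, and let W be the quadratic form on ℝ² determined by W(vᵢ - vⱼ) = d(xᵢ,xⱼ)² for the vertices v₁, v₂, v₃ of a nondegenerate triangle. Then W is positive semidefinite if and only if all three triangle inequalities d(xᵢ,xⱼ) ≤ d(xᵢ,x_k) + d(x_k,xⱼ) hold. -/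
/-!
Writing `a = d(x₁,x₂)`, `b = d(x₁,x₃)`, `c = d(x₂,x₃)`, the polarization identity gives
`W (s, t) = b² s² + (b² + c² - a²) s t + c² t²`. This binary form is positive semidefinite iff
its discriminant is nonpositive, and by Heron's factorization
`4 b² c² - (b² + c² - a²)² = (a + b + c) (b + c - a) (a - b + c) (a + b - c)`,
which for nonnegative `a, b, c` is nonnegative exactly when the triangle inequalities hold.
-/

theorem binary_quadratic_nonneg_iff {A B C : ℝ} (hA : 0 ≤ A) (hC : 0 ≤ C) :
    (∀ x y : ℝ, 0 ≤ A * x ^ 2 + B * x * y + C * y ^ 2) ↔ B ^ 2 ≤ 4 * A * C := by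
  constructor
  · intro h
    have := discrim_le_zero fun x => by simpa [sq, mul_comm] using h x 1
    rw [discrim] at this
    linarith
  · intro hB x y
    rcases hA.eq_or_lt with rfl | hA
    · obtain rfl : B = 0 := by nlinarith
      nlinarith
    · nlinarith [sq_nonneg (2 * A * x + B * y), mul_nonneg (sub_nonneg.2 hB) (sq_nonneg y)]

theorem QuadraticForm.apply_fin_two (W : QuadraticForm ℝ (Fin 2 → ℝ)) (u : Fin 2 → ℝ) :
    W u = W ![1, 0] * u 0 ^ 2 + QuadraticMap.polar W ![1, 0] ![0, 1] * u 0 * u 1 +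
      W ![0, 1] * u 1 ^ 2 := by
  have hu : u = u 0 • ![1, 0] + u 1 • ![0, 1] := by
    ext i; fin_cases i <;> simp
  conv_lhs => rw [hu]
  rw [QuadraticMap.map_add W, QuadraticMap.map_smul, QuadraticMap.map_smul,
    QuadraticMap.polar_smul_left, QuadraticMap.polar_smul_right]
  simp only [smul_eq_mul]
  ring

theorem QuadraticMap.polar_eq_add_sub_map_sub {R M N : Type*} [CommRing R] [AddCommGroup M]
    [AddCommGroup N] [Module R M] [Module R N] (Q : QuadraticMap R M N) (x y : M) :
    polar Q x y = Q x + Q y - Q (x - y) := by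
  rw [sub_eq_add_neg x, QuadraticMap.map_add Q, QuadraticMap.map_neg, polar_neg_right]
  abel

theorem QuadraticForm.nonneg_iff_polar_sq_le_fin_two (W : QuadraticForm ℝ (Fin 2 → ℝ))
    (h₀ : 0 ≤ W ![1, 0]) (h₁ : 0 ≤ W ![0, 1]) :
    (∀ u, 0 ≤ W u) ↔
      QuadraticMap.polar W ![1, 0] ![0, 1] ^ 2 ≤ 4 * W ![1, 0] * W ![0, 1] := by
  rw [← binary_quadratic_nonneg_iff h₀ h₁]
  refine ⟨fun h x y => ?_, fun h u => QuadraticForm.apply_fin_two W u ▸ h (u 0) (u 1)⟩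
  simpa [QuadraticForm.apply_fin_two W ![x, y]] using h ![x, y]

theorem sq_add_sq_sub_sq_sq_le_iff_triangle {a b c : ℝ} (ha : 0 ≤ a) (hb : 0 ≤ b) (hc : 0 ≤ c) :
    (b ^ 2 + c ^ 2 - a ^ 2) ^ 2 ≤ 4 * b ^ 2 * c ^ 2 ↔ a ≤ b + c ∧ b ≤ a + c ∧ c ≤ a + b := by
  have heron : 4 * b ^ 2 * c ^ 2 - (b ^ 2 + c ^ 2 - a ^ 2) ^ 2 =
      (a + b + c) * ((b + c - a) * ((a - b + c) * (a + b - c))) := by ring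
  rw [← sub_nonneg, heron]
  constructor
  · intro h
    refine ⟨?_, ?_, ?_⟩ <;> by_contra! hlt
    · nlinarith [mul_pos (mul_pos (by linarith : 0 < a + b + c) (by linarith : 0 < a - b + c))
        (by linarith : 0 < a + b - c)]
    · nlinarith [mul_pos (mul_pos (by linarith : 0 < a + b + c) (by linarith : 0 < b + c - a))
        (by linarith : 0 < a + b - c)]
    · nlinarith [mul_pos (mul_pos (by linarith : 0 < a + b + c) (by linarith : 0 < b + c - a))
        (by linarith : 0 < a - b + c)]
  · rintro ⟨h₁, h₂, h₃⟩
    exact mul_nonneg (by linarith) (mul_nonneg (by linarith)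
      (mul_nonneg (by linarith) (by linarith)))

theorem three_point_form_nonneg_iff_triangle_general (X : Type*) (d : X → X → ℝ)
    (hsymm : ∀ a b, d a b = d b a) (hnonneg : ∀ a b, 0 ≤ d a b)
    (x₁ x₂ x₃ : X)
    (v : Fin 3 → (Fin 2 → ℝ))
    (hv0 : v 0 = ![1, 0]) (hv1 : v 1 = ![0, 1]) (hv2 : v 2 = ![0, 0])
    (W : QuadraticForm ℝ (Fin 2 → ℝ))
    (hW12 : W (v 0 - v 1) = d x₁ x₂ ^ 2)
    (hW13 : W (v 0 - v 2) = d x₁ x₃ ^ 2)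
    (hW23 : W (v 1 - v 2) = d x₂ x₃ ^ 2) :
    (∀ u, 0 ≤ W u) ↔
      (d x₁ x₂ ≤ d x₁ x₃ + d x₃ x₂ ∧
       d x₁ x₃ ≤ d x₁ x₂ + d x₂ x₃ ∧
       d x₂ x₃ ≤ d x₂ x₁ + d x₁ x₃) := by
  have hv2' : v 2 = 0 := by simp [hv2]
  rw [hv0, hv1] at hW12
  rw [hv0, hv2', sub_zero] at hW13
  rw [hv1, hv2', sub_zero] at hW23
  rw [hsymm x₃, hsymm x₂ x₁, QuadraticForm.nonneg_iff_polar_sq_le_fin_two W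
    (hW13 ▸ sq_nonneg _) (hW23 ▸ sq_nonneg _), QuadraticMap.polar_eq_add_sub_map_sub,
    hW12, hW13, hW23]
  exact sq_add_sq_sub_sq_sq_le_iff_triangle (hnonneg _ _) (hnonneg _ _) (hnonneg _ _)

/-- for three points, W is positive semidefinite iff all three
triangle inequalities hold. -/
theorem three_point_form_nonneg_iff_triangle (X : Type*) (d : X → X → ℝ)
    (hsymm : ∀ a b, d a b = d b a) (hnonneg : ∀ a b, 0 ≤ d a b)
    (hdiag : ∀ a, d a a = 0)
    (x₁ x₂ x₃ : X)
    (v : Fin 3 → (Fin 2 → ℝ))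
    (hv0 : v 0 = ![1, 0]) (hv1 : v 1 = ![0, 1]) (hv2 : v 2 = ![0, 0])
    (W : QuadraticForm ℝ (Fin 2 → ℝ))
    (hW12 : W (v 0 - v 1) = d x₁ x₂ ^ 2)
    (hW13 : W (v 0 - v 2) = d x₁ x₃ ^ 2)
    (hW23 : W (v 1 - v 2) = d x₂ x₃ ^ 2) :
    (∀ u, 0 ≤ W u) ↔
      (d x₁ x₂ ≤ d x₁ x₃ + d x₃ x₂ ∧
       d x₁ x₃ ≤ d x₁ x₂ + d x₂ x₃ ∧
       d x₂ x₃ ≤ d x₂ x₁ + d x₁ x₃) :=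
  three_point_form_nonneg_iff_triangle_general X d hsymm hnonneg x₁ x₂ x₃ v hv0 hv1 hv2 W hW12 hW13
    hW23
end

section
/- Let x₁, x₂, x₃, x₄ be points in a metric space X and let W be the associated quadratic form on ℝ³ with respect to a nondegenerate tetrahedron. Then W is nonnegative on each of the four 2-dimensional linear subspaces parallel to the faces of the tetrahedron; consequently W has at most one negative eigenvalue. -/
/-!
The form `W` is determined by the squared side lengths of each face: on the face spanned by
`e₁ = v a - v c`, `e₂ = v b - v c` it reads `s² p² + t² q² + s t (p² + q² - r²)`, where `p, q, r`
are the distances `d(xₐ, x_c)`, `d(x_b, x_c)`, `d(xₐ, x_b)`. The triangle inequality for these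
three distances is exactly `|p² + q² - r²| ≤ 2 p q`, which makes this binary form nonnegative.
A negative definite plane would meet every face plane in a nonzero vector, by dimension count
in `ℝ³`.
-/

open Module Set Submodule

theorem QuadraticMap.map_smul_add_smul {R M : Type*} [CommRing R] [AddCommGroup M] [Module R M]
    (Q : QuadraticMap R M R) (s t : R) (e₁ e₂ : M) :
    Q (s • e₁ + t • e₂) =
      s * s * Q e₁ + t * t * Q e₂ + s * t * (Q e₁ + Q e₂ - Q (e₁ - e₂)) := by
  have hpolar : polar Q e₁ e₂ = Q e₁ + Q e₂ - Q (e₁ - e₂) := by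
    have h := QuadraticMap.map_add Q e₁ (-e₂)
    rw [← sub_eq_add_neg, QuadraticMap.map_neg, polar_neg_right] at h
    rw [h]
    ring
  rw [QuadraticMap.map_add Q, polar_smul_left, polar_smul_right, QuadraticMap.map_smul,
    QuadraticMap.map_smul, hpolar, smul_eq_mul, smul_eq_mul]
  ring

theorem abs_dist_sq_add_dist_sq_sub_dist_sq_le {X : Type*} [PseudoMetricSpace X] (a b c : X) :
    |dist a c ^ 2 + dist b c ^ 2 - dist a b ^ 2| ≤ 2 * dist a c * dist b c := by
  have hlower : (dist a c - dist b c) ^ 2 ≤ dist a b ^ 2 :=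
    sq_le_sq' (abs_le.mp (abs_dist_sub_le a b c)).1 (abs_le.mp (abs_dist_sub_le a b c)).2
  have hupper : dist a b ^ 2 ≤ (dist a c + dist b c) ^ 2 :=
    pow_le_pow_left₀ dist_nonneg (dist_triangle_right a b c) 2
  rw [abs_le]
  constructor <;> linarith

theorem dist_sq_form_nonneg {X : Type*} [PseudoMetricSpace X] (a b c : X) (s t : ℝ) :
    0 ≤ s * s * dist a c ^ 2 + t * t * dist b c ^ 2 +
      s * t * (dist a c ^ 2 + dist b c ^ 2 - dist a b ^ 2) := by
  set p := dist a c
  set q := dist b c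
  set m := p ^ 2 + q ^ 2 - dist a b ^ 2
  have hcross : -(s * t * m) ≤ |s * t| * (2 * p * q) :=
    calc -(s * t * m) ≤ |s * t * m| := neg_le_abs _
      _ = |s * t| * |m| := abs_mul _ _
      _ ≤ |s * t| * (2 * p * q) :=
        mul_le_mul_of_nonneg_left (abs_dist_sq_add_dist_sq_sub_dist_sq_le a b c) (abs_nonneg _)
  have hsq : (|s| * p - |t| * q) ^ 2 = s * s * p ^ 2 + t * t * q ^ 2 - |s * t| * (2 * p * q) := by
    rw [abs_mul]
    linear_combination p ^ 2 * sq_abs s + q ^ 2 * sq_abs t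
  linarith [sq_nonneg (|s| * p - |t| * q)]

theorem vectorSpan_range_le_span_pair {R M : Type*} [Ring R] [AddCommGroup M] [Module R M]
    (p : Fin 3 → M) : vectorSpan R (range p) ≤ span R {p 0 - p 2, p 1 - p 2} := by
  rw [vectorSpan_eq_span_vsub_set_right R (mem_range_self 2), span_le]
  rintro _ ⟨_, ⟨j, rfl⟩, rfl⟩
  fin_cases j
  · exact subset_span (mem_insert _ _)
  · exact subset_span (mem_insert_of_mem _ rfl)
  · simp

theorem nonneg_on_vectorSpan_of_eq_dist_sq {M X : Type*} [AddCommGroup M] [Module ℝ M]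
    [PseudoMetricSpace X] (Q : QuadraticMap ℝ M ℝ) (p : Fin 3 → M) (y : Fin 3 → X)
    (hQ : ∀ i j, Q (p i - p j) = dist (y i) (y j) ^ 2) :
    ∀ u ∈ vectorSpan ℝ (range p), 0 ≤ Q u := by
  intro u hu
  obtain ⟨s, t, rfl⟩ := mem_span_pair.mp (vectorSpan_range_le_span_pair p hu)
  rw [Q.map_smul_add_smul, hQ, hQ, sub_sub_sub_cancel_right, hQ]
  exact dist_sq_form_nonneg _ _ _ s t

section Face

variable {M : Type*} [AddCommGroup M] {n : ℕ}

def faceSpan (R : Type*) [Ring R] [Module R M] (v : Fin (n + 1) → M) (i : Fin (n + 1)) :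
    Submodule R M :=
  span R {u | ∃ j k, j ≠ i ∧ k ≠ i ∧ u = v j - v k}

theorem faceSpan_eq_vectorSpan (R : Type*) [Ring R] [Module R M] (v : Fin (n + 1) → M)
    (i : Fin (n + 1)) :
    faceSpan R v i = vectorSpan R (range (v ∘ i.succAbove)) := by
  rw [faceSpan, vectorSpan_def]
  congr 1
  ext u
  simp only [mem_ofPred_eq, mem_vsub, mem_range, Function.comp_apply, exists_exists_eq_and,
    vsub_eq_sub]
  constructor
  · rintro ⟨j, k, hj, hk, rfl⟩
    obtain ⟨a, rfl⟩ := Fin.exists_succAbove_eq hj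
    obtain ⟨b, rfl⟩ := Fin.exists_succAbove_eq hk
    exact ⟨a, b, rfl⟩
  · rintro ⟨a, b, rfl⟩
    exact ⟨_, _, i.succAbove_ne a, i.succAbove_ne b, rfl⟩

theorem AffineIndependent.finrank_faceSpan {K : Type*} [DivisionRing K] [Module K M]
    {v : Fin (n + 2) → M} (hv : AffineIndependent K v) (i : Fin (n + 2)) :
    finrank K (faceSpan K v i) = n := by
  rw [faceSpan_eq_vectorSpan]
  exact (hv.comp_embedding (Fin.succAboveEmb i)).finrank_vectorSpan (Fintype.card_fin _)

end Face

theorem Submodule.exists_mem_inf_ne_zero_of_finrank_lt {K V : Type*} [DivisionRing K]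
    [AddCommGroup V] [Module K V] [FiniteDimensional K V] (s t : Submodule K V)
    (h : finrank K V < finrank K s + finrank K t) : ∃ u ∈ s ⊓ t, u ≠ 0 := by
  apply exists_mem_ne_zero_of_ne_bot
  intro hbot
  have := finrank_sup_add_finrank_inf_eq s t
  rw [hbot, finrank_bot] at this
  have := (s ⊔ t).finrank_le
  omega

/-- the associated form of a quadruple is nonnegative on the four
planes parallel to the faces of the tetrahedron; consequently it has at most one
negative eigenvalue (no 2-dimensional negative definite subspace). -/
theorem four_point_form_faces_nonneg (X : Type*) [MetricSpace X] (x : Fin 4 → X)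
    (v : Fin 4 → (Fin 3 → ℝ)) (hv : AffineIndependent ℝ v)
    (W : QuadraticForm ℝ (Fin 3 → ℝ))
    (hW : ∀ i j, W (v i - v j) = dist (x i) (x j) ^ 2) :
    (∀ i : Fin 4,
      ∀ u ∈ Submodule.span ℝ {u | ∃ j k, j ≠ i ∧ k ≠ i ∧ u = v j - v k}, 0 ≤ W u) ∧
    ¬ ∃ V : Submodule ℝ (Fin 3 → ℝ), Module.finrank ℝ V = 2 ∧
        ∀ u ∈ V, u ≠ 0 → W u < 0 := by
  have hfaces (i : Fin 4) : ∀ u ∈ faceSpan ℝ v i, 0 ≤ W u := by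
    rw [faceSpan_eq_vectorSpan]
    exact nonneg_on_vectorSpan_of_eq_dist_sq W _ (x ∘ i.succAbove) fun j k => hW _ _
  refine ⟨hfaces, ?_⟩
  rintro ⟨V, hV, hneg⟩
  obtain ⟨u, hu, hu0⟩ := V.exists_mem_inf_ne_zero_of_finrank_lt (faceSpan ℝ v 0)
    (by rw [hV, hv.finrank_faceSpan]; simp)
  exact (hneg u (mem_inf.mp hu).1 hu0).not_ge (hfaces 0 u (mem_inf.mp hu).2)
end

section
/- Let x₁,…,x₅ be points in a metric space X and let W be the associated quadratic form on ℝ⁴ with respect to a nondegenerate 4-simplex. Then W is nonnegative on every 2-dimensional linear subspace parallel to one of the ten 2-dimensional faces of the simplex; consequently W has at most two negative eigenvalues. -/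
/-!
On the plane spanned by `e₁ = v j - v i` and `e₂ = v k - v i`, the form `W` takes the values
`W (s • e₁ + t • e₂) = s² a² + t² b² + s t (a² + b² - c²)`, where `a, b, c` are the side lengths
of the triangle `x j, x k, x i`. By the triangle inequality this binary form is positive
semidefinite: its discriminant is `-((a + b)² - c²) (c² - (a - b)²) ≤ 0`. A negative definite
subspace meets such a plane trivially, so in `ℝ⁴` it has dimension at most `4 - 2 = 2`.
-/

open Module

namespace QuadraticMap

variable {R M : Type*} [CommRing R] [AddCommGroup M] [Module R M]

lemma polar_eq_add_sub_map_sub_s4 (Q : QuadraticMap R M R) (x y : M) :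
    polar Q x y = Q x + Q y - Q (x - y) := by
  rw [sub_eq_add_neg x y, QuadraticMap.map_add (⇑Q), QuadraticMap.map_neg, polar_neg_right]
  ring

lemma map_smul_add_smul_s4 (Q : QuadraticMap R M R) (s t : R) (x y : M) :
    Q (s • x + t • y) = s ^ 2 * Q x + t ^ 2 * Q y + s * t * polar Q x y := by
  rw [QuadraticMap.map_add (⇑Q), QuadraticMap.map_smul, QuadraticMap.map_smul, polar_smul_left,
    polar_smul_right, smul_eq_mul, smul_eq_mul, smul_eq_mul, smul_eq_mul]
  ring

end QuadraticMap

lemma sq_add_sq_add_mul_nonneg_of_triangle {a b c : ℝ} (h₁ : |a - b| ≤ c) (h₂ : c ≤ a + b)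
    (s t : ℝ) : 0 ≤ s ^ 2 * a ^ 2 + t ^ 2 * b ^ 2 + s * t * (a ^ 2 + b ^ 2 - c ^ 2) := by
  have hc : 0 ≤ c := (abs_nonneg _).trans h₁
  have hsum : 0 ≤ (a + b) ^ 2 - c ^ 2 := sub_nonneg.2 (pow_le_pow_left₀ hc h₂ 2)
  have hdiff : 0 ≤ c ^ 2 - (a - b) ^ 2 :=
    sub_nonneg.2 (sq_le_sq.2 (h₁.trans_eq (abs_of_nonneg hc).symm))
  rcases le_total 0 (s * t) with hst | hst
  · calc 0 ≤ (s * a - t * b) ^ 2 + s * t * ((a + b) ^ 2 - c ^ 2) :=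
          add_nonneg (sq_nonneg _) (mul_nonneg hst hsum)
      _ = _ := by ring
  · calc 0 ≤ (s * a + t * b) ^ 2 + -(s * t) * (c ^ 2 - (a - b) ^ 2) :=
          add_nonneg (sq_nonneg _) (mul_nonneg (neg_nonneg.mpr hst) hdiff)
      _ = _ := by ring

lemma QuadraticMap.nonneg_on_span_pair_of_dist {M X : Type*} [AddCommGroup M] [Module ℝ M]
    [PseudoMetricSpace X] (Q : QuadraticMap ℝ M ℝ) {e₁ e₂ : M} (p q r : X)
    (h₁ : Q e₁ = dist p r ^ 2) (h₂ : Q e₂ = dist q r ^ 2) (h₁₂ : Q (e₁ - e₂) = dist p q ^ 2) :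
    ∀ u ∈ Submodule.span ℝ {e₁, e₂}, 0 ≤ Q u := by
  intro u hu
  obtain ⟨s, t, rfl⟩ := Submodule.mem_span_pair.mp hu
  rw [Q.map_smul_add_smul_s4, Q.polar_eq_add_sub_map_sub_s4, h₁, h₂, h₁₂]
  refine sq_add_sq_add_mul_nonneg_of_triangle (abs_dist_sub_le p q r) ?_ s t
  exact (dist_triangle p r q).trans_eq (by rw [dist_comm r q])

lemma QuadraticForm.sigNeg_add_finrank_le_of_nonneg {𝕜 M : Type*} [Field 𝕜] [LinearOrder 𝕜]
    [IsStrictOrderedRing 𝕜] [AddCommGroup M] [Module 𝕜 M] [FiniteDimensional 𝕜 M]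
    {Q : QuadraticForm 𝕜 M} {V : Submodule 𝕜 M} (hV : ∀ x ∈ V, 0 ≤ Q x) :
    sigNeg Q + finrank 𝕜 V ≤ finrank 𝕜 M := by
  simpa using QuadraticForm.sigPos_add_finrank_le_of_nonpos (Q := -Q) (V := V)
    (fun x hx => by simpa using hV x hx)

lemma AffineIndependent.finrank_span_vsub_pair {k V P ι : Type*} [DivisionRing k]
    [AddCommGroup V] [Module k V] [AddTorsor V P] {p : ι → P} (hp : AffineIndependent k p)
    {i j l : ι} (hij : i ≠ j) (hil : i ≠ l) (hjl : j ≠ l) :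
    finrank k (Submodule.span k {p j -ᵥ p i, p l -ᵥ p i}) = 2 := by
  have hli := (affineIndependent_iff_linearIndependent_vsub k p i).mp hp
  have hpair : LinearIndependent k ![p j -ᵥ p i, p l -ᵥ p i] := by
    have hface : ![p j -ᵥ p i, p l -ᵥ p i] =
        (fun m : {m // m ≠ i} => p m -ᵥ p i) ∘ ![⟨j, hij.symm⟩, ⟨l, hil.symm⟩] := by
      ext b; fin_cases b <;> rfl
    rw [hface]
    exact hli.comp _ (by intro a b; fin_cases a <;> fin_cases b <;> simp [hjl, hjl.symm])
  rw [← Matrix.range_cons_cons_empty _ _ ![]]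
  simp [finrank_span_eq_card hpair]

/-- the associated form of a quintuple is nonnegative on the ten
planes parallel to the 2-faces of the 4-simplex; consequently it has at most two
negative eigenvalues (no 3-dimensional negative definite subspace). -/
theorem five_point_form_faces_nonneg (X : Type*) [MetricSpace X] (x : Fin 5 → X)
    (v : Fin 5 → (Fin 4 → ℝ)) (hv : AffineIndependent ℝ v)
    (W : QuadraticForm ℝ (Fin 4 → ℝ))
    (hW : ∀ i j, W (v i - v j) = dist (x i) (x j) ^ 2) :
    (∀ i j k : Fin 5, i ≠ j → i ≠ k → j ≠ k →
      ∀ u ∈ Submodule.span ℝ {v j - v i, v k - v i}, 0 ≤ W u) ∧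
    ¬ ∃ V : Submodule ℝ (Fin 4 → ℝ), Module.finrank ℝ V = 3 ∧
        ∀ u ∈ V, u ≠ 0 → W u < 0 := by
  have faces : ∀ i j k : Fin 5, i ≠ j → i ≠ k → j ≠ k →
      ∀ u ∈ Submodule.span ℝ {v j - v i, v k - v i}, 0 ≤ W u := fun i j k _ _ _ =>
    W.nonneg_on_span_pair_of_dist (x j) (x k) (x i) (hW j i) (hW k i)
      (by rw [sub_sub_sub_cancel_right]; exact hW j k)
  refine ⟨faces, ?_⟩
  rintro ⟨V, hV, hVneg⟩
  have hplane : finrank ℝ (Submodule.span ℝ {v 1 - v 0, v 2 - v 0}) = 2 :=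
    hv.finrank_span_vsub_pair (by decide) (by decide) (by decide)
  have hupper := QuadraticForm.sigNeg_add_finrank_le_of_nonneg
    (faces 0 1 2 (by decide) (by decide) (by decide))
  have hlower : 3 ≤ sigNeg W :=
    hV ▸ le_sigNeg_of_negDef W fun u hu => by simpa using hVneg u u.2 (by simpa using hu)
  simp only [hplane, finrank_fin_fun] at hupper
  omega
end

section
/- Let x₁,…,x₄ be points in a metric space, W the associated quadratic form on ℝ³ with respect to a nondegenerate tetrahedron with vertices v₁,…,v₄, and suppose W(w) < 0. Let P : ℝ³ → ℝ² be a linear projection with kernel spanned by w onto a plane transversal to w. Then the four projected points P(v₁),…,P(v₄) are in general position: no three of them lie on a common line. -/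
/-!
By the triangle inequality, the associated form `W` is nonnegative on the direction of the plane
through any three of the vertices: there it is the Gram form of a Euclidean triangle with the same
side lengths. Since `W w < 0`, the kernel `ℝ ∙ w` of `P` meets that direction only in `0`, so `P`
is injective on it and keeps the three vertices affinely independent.
-/

/-- The quadratic form is `‖a • e₁ + b • e₂‖²` for a Euclidean triangle with `‖e₁‖ = q`,
`‖e₂‖ = r`, `‖e₁ - e₂‖ = p`; it equals `(a q ∓ b r)² ± a b ((q ± r)² - p²)`. -/
lemma gram_nonneg_of_triangle {p q r : ℝ} (hp : p ≤ q + r) (hq : q ≤ p + r) (hr : r ≤ p + q)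
    (a b : ℝ) : 0 ≤ a ^ 2 * q ^ 2 + b ^ 2 * r ^ 2 + a * b * (q ^ 2 + r ^ 2 - p ^ 2) := by
  rcases le_total 0 (a * b) with hab | hab
  · nlinarith [sq_nonneg (a * q - b * r),
      mul_nonneg (mul_nonneg hab (by linarith : 0 ≤ q + r - p)) (by linarith : 0 ≤ q + r + p)]
  · nlinarith [sq_nonneg (a * q + b * r),
      mul_nonneg (mul_nonneg (neg_nonneg.mpr hab) (by linarith : 0 ≤ p + r - q))
        (by linarith : 0 ≤ p + q - r)]

namespace QuadraticMap

variable {M : Type*} [AddCommGroup M] [Module ℝ M] (Q : QuadraticForm ℝ M)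

lemma apply_smul_add_smul (a b : ℝ) (y z : M) :
    Q (a • y + b • z) = a ^ 2 * Q y + b ^ 2 * Q z + a * b * (Q y + Q z - Q (y - z)) := by
  have hpolar : polar Q y z = Q y + Q z - Q (y - z) := by
    have := polar_neg_right Q y z
    rw [polar, Q.map_neg, ← sub_eq_add_neg] at this
    linarith
  rw [QuadraticMap.map_add (⇑Q), Q.map_smul, Q.map_smul, polar_smul_left, polar_smul_right,
    hpolar]
  simp only [smul_eq_mul]
  ring

lemma disjoint_span_singleton_of_nonneg {S : Submodule ℝ M} (hS : ∀ y ∈ S, 0 ≤ Q y) {w : M}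
    (hw : Q w < 0) : Disjoint S (ℝ ∙ w) := by
  rw [Submodule.disjoint_def]
  rintro y hyS hyw
  obtain ⟨t, rfl⟩ := Submodule.mem_span_singleton.mp hyw
  have ht : t = 0 := by
    by_contra ht
    have hQt := hS _ hyS
    rw [Q.map_smul, smul_eq_mul] at hQt
    nlinarith [mul_self_pos.mpr ht]
  rw [ht, zero_smul]

lemma nonneg_of_mem_vectorSpan_of_eq_dist_sq {X : Type*} [PseudoMetricSpace X] (x : Fin 3 → X)
    (v : Fin 3 → M) (hQ : ∀ i j, Q (v i - v j) = dist (x i) (x j) ^ 2) :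
    ∀ y ∈ vectorSpan ℝ (Set.range v), 0 ≤ Q y := by
  intro y hy
  rw [vectorSpan_range_eq_span_range_vsub_right ℝ v 2,
    Submodule.mem_span_range_iff_exists_fun] at hy
  obtain ⟨c, rfl⟩ := hy
  simp only [Fin.sum_univ_three, vsub_eq_sub, sub_self, smul_zero, add_zero]
  rw [apply_smul_add_smul, sub_sub_sub_cancel_right, hQ, hQ, hQ]
  exact gram_nonneg_of_triangle (dist_triangle_right _ _ _) (dist_triangle _ _ _)
    (dist_triangle_left _ _ _) _ _

end QuadraticMap

lemma AffineIndependent.map_linearMap {k V V₂ ι : Type*} [Ring k] [AddCommGroup V] [Module k V]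
    [AddCommGroup V₂] [Module k V₂] {v : ι → V} (hv : AffineIndependent k v) (f : V →ₗ[k] V₂)
    (hf : Disjoint (vectorSpan k (Set.range v)) (LinearMap.ker f)) :
    AffineIndependent k (f ∘ v) := by
  rcases isEmpty_or_nonempty ι with _ | ⟨⟨i₀⟩⟩
  · exact affineIndependent_of_subsingleton k _
  rw [affineIndependent_iff_linearIndependent_vsub k v i₀] at hv
  rw [affineIndependent_iff_linearIndependent_vsub k _ i₀]
  rw [vectorSpan_range_eq_span_range_vsub_right_ne k v i₀] at hf
  simpa [Function.comp_def] using hv.map hf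

/-- projecting the tetrahedron's vertices along a negative vector
yields four points in general position (no three collinear). -/
theorem projection_general_position (X : Type*) [MetricSpace X] (x : Fin 4 → X)
    (v : Fin 4 → (Fin 3 → ℝ)) (hv : AffineIndependent ℝ v)
    (W : QuadraticForm ℝ (Fin 3 → ℝ))
    (hW : ∀ i j, W (v i - v j) = dist (x i) (x j) ^ 2)
    (w : Fin 3 → ℝ) (hw : W w < 0)
    (P : (Fin 3 → ℝ) →ₗ[ℝ] (Fin 2 → ℝ))
    (hker : LinearMap.ker P = Submodule.span ℝ {w}) :
    ∀ i j k : Fin 4, i ≠ j → i ≠ k → j ≠ k →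
      AffineIndependent ℝ ![P (v i), P (v j), P (v k)] := by
  intro i j k hij hik hjk
  have hinj : Function.Injective ![i, j, k] := by
    simp only [Matrix.vecCons, Fin.cons_injective_iff]
    simp [hij, hik, hjk, Function.injective_of_subsingleton]
  have hnonneg := W.nonneg_of_mem_vectorSpan_of_eq_dist_sq (x ∘ ![i, j, k]) (v ∘ ![i, j, k])
    fun _ _ => hW _ _
  have hdisj := W.disjoint_span_singleton_of_nonneg hnonneg hw
  rw [← hker] at hdisj
  have hcomp : ![P (v i), P (v j), P (v k)] = P ∘ v ∘ ![i, j, k] := by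
    funext e
    fin_cases e <;> rfl
  rw [hcomp]
  exact (hv.comp_embedding ⟨_, hinj⟩).map_linearMap P hdisj
end

section
/- Let x₁,…,xₙ be points in a real inner product space H, and let vᵢ = eᵢ for i < n and vₙ = 0 in ℝ^{n-1}. Let W be the quadratic form on ℝ^{n-1} determined by W(vᵢ - vⱼ) = ‖xᵢ - xⱼ‖² for all i, j. Then W is positive semidefinite, i.e. W(v) ≥ 0 for all v ∈ ℝ^{n-1}. -/
/-- for points in a real inner product space, the associated form
(with respect to the standard simplex vᵢ = eᵢ for i < n, vₙ = 0) is positive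
semidefinite. -/
theorem inner_product_array_form_nonneg (n : ℕ) (H : Type*) [NormedAddCommGroup H]
    [InnerProductSpace ℝ H] (x : Fin (n + 1) → H)
    (v : Fin (n + 1) → (Fin n → ℝ))
    (hv : ∀ i : Fin (n + 1),
      v i = if h : (i : ℕ) < n then Pi.single (⟨i, h⟩ : Fin n) (1 : ℝ) else 0)
    (W : QuadraticForm ℝ (Fin n → ℝ))
    (hW : ∀ i j, W (v i - v j) = ‖x i - x j‖ ^ 2) :
    ∀ u, 0 ≤ W u := by
  intro u
  set e : Fin n → (Fin n → ℝ) := fun i => Pi.single i (1 : ℝ) with he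
  set y : Fin n → H := fun i => x i.castSucc - x (Fin.last n) with hy
  have hve : ∀ i : Fin n, v i.castSucc - v (Fin.last n) = e i := by
    intro i
    rw [hv, hv]
    simp [Fin.is_lt, he]
  have hWe : ∀ i, W (e i) = ‖y i‖ ^ 2 := fun i => by
    rw [← hve i]; exact hW _ _
  have hWsub : ∀ i j, W (e i - e j) = ‖y i - y j‖ ^ 2 := by
    intro i j
    rw [← hve i, ← hve j]
    rw [sub_sub_sub_cancel_right, hW i.castSucc j.castSucc, hy]
    congr 2
    rw [sub_sub_sub_cancel_right]
  set B := QuadraticMap.associated (R := ℝ) W with hB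
  have hBself : B u u = W u := QuadraticMap.associated_eq_self_apply ℝ W u
  have hBe : ∀ i j, B (e i) (e j) = inner ℝ (y i) (y j) := by
    intro i j
    have h1 : B (e i) (e j) = - B (e i) (- e j) := by
      rw [map_neg, neg_neg]
    have h2 : B (e i) (- e j) =
        (2 : ℝ)⁻¹ • (W (e i + - e j) - W (e i) - W (- e j)) := by
      rw [hB, QuadraticMap.associated_apply, Module.End.smul_def,
        QuadraticMap.half_moduleEnd_apply_eq_half_smul,
        smul_eq_mul, smul_eq_mul]
      norm_num [invOf_eq_inv]
    have h3 : W (- e j) = W (e j) := by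
      have := QuadraticMap.map_smul W (-1 : ℝ) (e j)
      simpa using this
    have h4 : ‖y i - y j‖ ^ 2 = ‖y i‖ ^ 2 - 2 * inner ℝ (y i) (y j) + ‖y j‖ ^ 2 :=
      norm_sub_sq_real (y i) (y j)
    rw [h1, h2, h3, ← sub_eq_add_neg, hWsub, hWe, hWe, h4, smul_eq_mul]
    ring
  -- expand u as a sum of singles
  have hu : u = ∑ i : Fin n, (u i) • e i := by
    ext j
    simp [he, Finset.sum_apply, Pi.single_apply]
  have expand : B u u = ∑ i : Fin n, ∑ j : Fin n, (u i) * (u j) * inner ℝ (y i) (y j) := by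
    conv_lhs => rw [hu]
    simp only [map_sum, map_smul, LinearMap.sum_apply, LinearMap.smul_apply, smul_eq_mul,
      Finset.mul_sum]
    rw [Finset.sum_comm]
    refine Finset.sum_congr rfl fun i _ => Finset.sum_congr rfl fun j _ => ?_
    rw [hBe]
    ring
  have key : B u u = inner ℝ (∑ i : Fin n, (u i) • y i) (∑ j : Fin n, (u j) • y j) := by
    rw [expand, sum_inner]
    refine Finset.sum_congr rfl fun i _ => ?_
    rw [inner_sum]
    refine Finset.sum_congr rfl fun j _ => ?_
    rw [real_inner_smul_left, real_inner_smul_right]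
    ring
  rw [← hBself, key]
  exact real_inner_self_nonneg
end

section
/- A point array x₁,…,xₙ in a metric space embeds isometrically into ℝ^{n-1} if and only if the Gram-type matrix G with entries Gᵢⱼ = ½ (dist(xᵢ,xₙ)² + dist(xⱼ,xₙ)² - dist(xᵢ,xⱼ)²), for 1 ≤ i, j ≤ n-1, is positive semidefinite. -/
/-!
Translating the array so that `xₙ` sits at the origin, an isometric copy is the same as vectors
`v₁, …, vₙ₋₁` with `‖vᵢ‖ = dist(xᵢ, xₙ)` and `‖vᵢ - vⱼ‖ = dist(xᵢ, xⱼ)`; by polarization these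
conditions say exactly that the Gram matrix of the `vᵢ` is `G`. A real matrix is a Gram matrix of
`n - 1` vectors in `ℝ^{n-1}` iff it is positive semidefinite: write it as `Bᵀ B` and take the
columns of `B`.
-/

open Matrix
open scoped RealInnerProductSpace

open scoped ComplexOrder MatrixOrder in
theorem Matrix.posSemidef_iff_exists_gram {𝕜 ι : Type*} [RCLike 𝕜] [Fintype ι]
    {A : Matrix ι ι 𝕜} : A.PosSemidef ↔ ∃ v : ι → EuclideanSpace 𝕜 ι, gram 𝕜 v = A := by
  classical
  refine ⟨fun hA => ?_, fun ⟨v, hv⟩ => hv ▸ posSemidef_gram 𝕜 v⟩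
  obtain ⟨B, rfl⟩ := CStarAlgebra.nonneg_iff_eq_star_mul_self.mp hA.nonneg
  refine ⟨fun i => WithLp.toLp 2 fun k => B k i, ?_⟩
  rw [gram_eq_conjTranspose_mul (EuclideanSpace.basisFun ι 𝕜)]
  rfl

section Schoenberg

variable {E X ι : Type*} [NormedAddCommGroup E] [InnerProductSpace ℝ E] [PseudoMetricSpace X]

/-- The paper's quadratic form associated with the array, with `p` in the role of `xₙ`. -/
noncomputable def schoenbergMatrix (x : ι → X) (p : X) : Matrix ι ι ℝ :=
  of fun i j => (dist (x i) p ^ 2 + dist (x j) p ^ 2 - dist (x i) (x j) ^ 2) / 2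

theorem gram_eq_schoenbergMatrix_iff (x : ι → X) (p : X) (v : ι → E) :
    gram ℝ v = schoenbergMatrix x p ↔
      (∀ i, ‖v i‖ = dist (x i) p) ∧ ∀ i j, ‖v i - v j‖ = dist (x i) (x j) := by
  have polarization : ∀ i j, ⟪v i, v j⟫ = (‖v i‖ ^ 2 + ‖v j‖ ^ 2 - ‖v i - v j‖ ^ 2) / 2 := by
    intro i j
    linarith [norm_sub_sq_real (v i) (v j)]
  constructor
  · intro h
    have hinner : ∀ i j, ⟪v i, v j⟫ = schoenbergMatrix x p i j := fun i j => by
      rw [← h, gram_apply]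
    have hnorm : ∀ i, ‖v i‖ = dist (x i) p := fun i => by
      have := hinner i i
      rw [real_inner_self_eq_norm_sq, schoenbergMatrix, of_apply, dist_self] at this
      exact (sq_eq_sq₀ (norm_nonneg _) dist_nonneg).mp (by linarith)
    refine ⟨hnorm, fun i j => (sq_eq_sq₀ (norm_nonneg _) dist_nonneg).mp ?_⟩
    have := hinner i j
    rw [polarization, schoenbergMatrix, of_apply, hnorm, hnorm] at this
    linarith
  · rintro ⟨hnorm, hdist⟩
    ext i j
    rw [gram_apply, polarization, schoenbergMatrix, of_apply, hnorm, hnorm, hdist]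

theorem exists_isometric_fin_succ_iff {n : ℕ} (x : Fin (n + 1) → X) :
    (∃ y : Fin (n + 1) → E, ∀ i j, ‖y i - y j‖ = dist (x i) (x j)) ↔
      ∃ v : Fin n → E, gram ℝ v = schoenbergMatrix (x ∘ Fin.castSucc) (x (Fin.last n)) := by
  simp only [gram_eq_schoenbergMatrix_iff, Function.comp_apply]
  constructor
  · rintro ⟨y, hy⟩
    exact ⟨fun i => y i.castSucc - y (Fin.last n), fun i => hy _ _,
      fun i j => by rw [sub_sub_sub_cancel_right, hy]⟩
  · rintro ⟨v, hnorm, hdist⟩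
    refine ⟨Fin.lastCases 0 v, fun i j => ?_⟩
    induction i using Fin.lastCases <;> induction j using Fin.lastCases <;>
      simp [hnorm, hdist, dist_comm]

end Schoenberg

/-- Schoenberg criterion -- the array embeds isometrically into
ℝ^{n-1} iff the Gram-type matrix is positive semidefinite. -/
theorem schoenberg_criterion (n : ℕ) (X : Type*) [MetricSpace X]
    (x : Fin (n + 1) → X)
    (G : Matrix (Fin n) (Fin n) ℝ)
    (hG : ∀ i j, G i j =
      (dist (x i.castSucc) (x (Fin.last n)) ^ 2 +
       dist (x j.castSucc) (x (Fin.last n)) ^ 2 -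
       dist (x i.castSucc) (x j.castSucc) ^ 2) / 2) :
    (∃ y : Fin (n + 1) → EuclideanSpace ℝ (Fin n),
        ∀ i j, ‖y i - y j‖ = dist (x i) (x j)) ↔ G.PosSemidef := by
  have hG' : G = schoenbergMatrix (x ∘ Fin.castSucc) (x (Fin.last n)) := Matrix.ext hG
  rw [exists_isometric_fin_succ_iff, hG', posSemidef_iff_exists_gram]
end

section
/- Let x₁,…,x₄ be four points in a real inner product space H (so the quadruple is 'Euclidean'). Then the associated quadratic form W on ℝ³ has no negative eigenvalues; in particular such a quadruple is of neither type ⊠(3) nor type ⊠(4). -/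
/-!
Affine independence makes `v` an affine basis of `ℝ³`, so some affine map `f` sends each `vᵢ`
to `xᵢ`. The forms `W` and `u ↦ ‖f.linear u‖²` agree on every difference `vᵢ - vⱼ`, and by
polarization a quadratic form is determined by these values, since the differences span `ℝ³`.
So `W` is the Gram form of `f.linear`, hence nonnegative.
-/

theorem QuadraticMap.ext_of_apply_sub {ι R M N : Type*} [CommRing R] [AddCommGroup M] [Module R M]
    [AddCommGroup N] [Module R N] [Nonempty ι] (h2 : IsUnit (2 : R)) {p : ι → M}
    (hp : affineSpan R (Set.range p) = ⊤) {Q Q' : QuadraticMap R M N}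
    (h : ∀ i j, Q (p i - p j) = Q' (p i - p j)) : Q = Q' := by
  obtain ⟨i₀⟩ := ‹Nonempty ι›
  have hspan : vectorSpan R (Set.range p) = ⊤ := by
    rw [← direction_affineSpan, hp, AffineSubspace.direction_top]
  have hright := vectorSpan_range_eq_span_range_vsub_right R p i₀
  have hleft := vectorSpan_range_eq_span_range_vsub_left R p i₀
  simp only [vsub_eq_sub] at hright hleft
  apply QuadraticMap.polarBilin_injective h2
  refine LinearMap.ext_on_range (hright.symm.trans hspan) fun i => ?_
  refine LinearMap.ext_on_range (hleft.symm.trans hspan) fun j => ?_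
  -- `(p i - p i₀) + (p i₀ - p j) = p i - p j`, so the polar form only sees differences
  simp only [QuadraticMap.polarBilin_apply_apply, QuadraticMap.polar, sub_add_sub_cancel, h]

theorem AffineBasis.exists_affineMap_apply_eq {ι k V P V₂ P₂ : Type*} [CommRing k]
    [AddCommGroup V] [Module k V] [AddTorsor V P] [AddCommGroup V₂] [Module k V₂]
    [AddTorsor V₂ P₂] (b : AffineBasis ι k P) (x : ι → P₂) :
    ∃ f : P →ᵃ[k] P₂, ∀ i, f (b i) = x i := by
  obtain ⟨i₀⟩ := b.nonempty
  let T : V →ₗ[k] V₂ := (b.basisOf i₀).constr k fun j => x j -ᵥ x i₀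
  have hT : ∀ i, T (b i -ᵥ b i₀) = x i -ᵥ x i₀ := by
    intro i
    by_cases hi : i = i₀
    · simp [hi]
    · simpa [T, b.basisOf_apply] using (b.basisOf i₀).constr_basis k _ ⟨i, hi⟩
  refine ⟨AffineMap.mk' (fun q => T (q -ᵥ b i₀) +ᵥ x i₀) T (b i₀) fun q => by simp, fun i => ?_⟩
  simp [AffineMap.mk', hT]

/-- for a quadruple in a real inner product space the associated
form has no negative eigenvalues, i.e. it is nonnegative everywhere. -/
theorem euclidean_quadruple_no_negative (H : Type*) [NormedAddCommGroup H]
    [InnerProductSpace ℝ H] (x : Fin 4 → H)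
    (v : Fin 4 → (Fin 3 → ℝ)) (hv : AffineIndependent ℝ v)
    (W : QuadraticForm ℝ (Fin 3 → ℝ))
    (hW : ∀ i j, W (v i - v j) = ‖x i - x j‖ ^ 2) :
    ∀ u, 0 ≤ W u := by
  have hspan : affineSpan ℝ (Set.range v) = ⊤ :=
    hv.affineSpan_eq_top_iff_card_eq_finrank_add_one.mpr (by simp)
  obtain ⟨f, hf⟩ : ∃ f : (Fin 3 → ℝ) →ᵃ[ℝ] H, ∀ i, f (v i) = x i :=
    AffineBasis.exists_affineMap_apply_eq ⟨v, hv, hspan⟩ x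
  have hW_eq : W = LinearMap.BilinMap.toQuadraticMap ((innerₗ H).compl₁₂ f.linear f.linear) := by
    refine QuadraticMap.ext_of_apply_sub (isUnit_of_invertible 2) hspan fun i j => ?_
    have hfv : f.linear (v i - v j) = x i - x j := by
      rw [← vsub_eq_sub, f.linearMap_vsub, hf, hf, vsub_eq_sub]
    rw [LinearMap.BilinMap.toQuadraticMap_apply, LinearMap.compl₁₂_apply, innerₗ_apply_apply,
      hfv, hW, real_inner_self_eq_norm_sq]
  intro u
  rw [hW_eq]
  exact real_inner_self_nonneg
end

section
/- For five points x₁,…,x₅ in a real inner product space, the associated quadratic form W on ℝ⁴ is positive semidefinite; in particular, a Euclidean 5-point array is of none of the types ⌂(3), ⌂(4), ⌂(5) (which all require W to have exactly two negative eigenvalues). -/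
/-! Affine independence of `v` yields a linear map `L : ℝ⁴ → H` with `L (vᵢ - vⱼ) = xᵢ - xⱼ`.
Then `W` and `u ↦ ‖L u‖²` agree on every `vᵢ - vⱼ`; by polarization their polar forms agree on
the spanning family `vᵢ - v₀`, so `W = ‖L ·‖² ≥ 0`. -/

namespace QuadraticMap

variable {ι R M N : Type*} [CommRing R] [AddCommGroup M] [Module R M] [AddCommGroup N]
  [Module R N]

theorem polar_sub_sub (Q : QuadraticMap R M N) (a b c : M) :
    polar Q (a - c) (b - c) = Q (a - c) + Q (b - c) - Q (a - b) := by
  have h := polar_neg_right Q (a - c) (b - c)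
  rw [polar, ← sub_eq_add_neg, QuadraticMap.map_neg, sub_sub_sub_cancel_right] at h
  rw [eq_sub_iff_add_eq, ← neg_eq_iff_eq_neg.mpr h]
  abel

theorem ext_of_map_sub [Nonempty ι] (h2 : IsUnit (2 : R)) {v : ι → M}
    (hv : vectorSpan R (Set.range v) = ⊤) {Q₁ Q₂ : QuadraticMap R M N}
    (h : ∀ i j, Q₁ (v i - v j) = Q₂ (v i - v j)) : Q₁ = Q₂ := by
  let i₀ := Classical.arbitrary ι
  rw [vectorSpan_range_eq_span_range_vsub_right R v i₀] at hv
  apply polarBilin_injective h2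
  refine LinearMap.ext_on_range hv fun i => LinearMap.ext_on_range hv fun j => ?_
  simp only [vsub_eq_sub, polarBilin_apply_apply, polar_sub_sub, h]

end QuadraticMap

theorem AffineIndependent.exists_linearMap_map_sub {ι K V E : Type*} [Nonempty ι] [Field K]
    [AddCommGroup V] [Module K V] [AddCommGroup E] [Module K E] {v : ι → V}
    (hv : AffineIndependent K v) (x : ι → E) :
    ∃ L : V →ₗ[K] E, ∀ i j, L (v i - v j) = x i - x j := by
  let i₀ := Classical.arbitrary ι
  have hli := (affineIndependent_iff_linearIndependent_vsub K v i₀).mp hv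
  obtain ⟨L, hL⟩ := LinearMap.exists_extend ((Module.Basis.span hli).constr K fun i => x i - x i₀)
  have hL₀ : ∀ i, L (v i - v i₀) = x i - x i₀ := by
    intro i
    by_cases hi : i = i₀
    · simp [hi]
    · have := congr($hL (Module.Basis.span hli ⟨i, hi⟩))
      rwa [LinearMap.comp_apply, Module.Basis.constr_basis, Submodule.subtype_apply,
        Module.Basis.span_apply] at this
  refine ⟨L, fun i j => ?_⟩
  rw [← sub_sub_sub_cancel_right (v i) (v j) (v i₀), map_sub, hL₀, hL₀, sub_sub_sub_cancel_right]

/-- for five points in a real inner product space the associated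
form on ℝ⁴ is positive semidefinite. -/
theorem euclidean_quintuple_form_nonneg (H : Type*) [NormedAddCommGroup H]
    [InnerProductSpace ℝ H] (x : Fin 5 → H)
    (v : Fin 5 → (Fin 4 → ℝ)) (hv : AffineIndependent ℝ v)
    (W : QuadraticForm ℝ (Fin 4 → ℝ))
    (hW : ∀ i j, W (v i - v j) = ‖x i - x j‖ ^ 2) :
    ∀ u, 0 ≤ W u := by
  obtain ⟨L, hL⟩ := hv.exists_linearMap_map_sub x
  have hWL : W = (LinearMap.BilinMap.toQuadraticMap (innerₗ H)).comp L :=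
    QuadraticMap.ext_of_map_sub two_ne_zero.isUnit
      (hv.vectorSpan_eq_top_of_card_eq_finrank_add_one (by simp))
      fun i j => by
        rw [hW, QuadraticMap.comp_apply, LinearMap.BilinMap.toQuadraticMap_apply, hL,
          innerₗ_apply_apply, real_inner_self_eq_norm_sq]
  intro u
  rw [hWL]
  exact real_inner_self_nonneg
end
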